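/- arXiv:1712.02403 — 2 statements merged into one kernel-verified Lean document; each statement's English description precedes it below -/
import Mathlib

section
/- Let G be a directed graph and let U be a k-special set of vertices of G, where k is a perfect square. Then the edges of the induced subgraph on U can be 2-coloured so that every monochromatic directed path has length at most √k. -/
open Real

/-- An oriented graph: no loops and no bi-directed edges. -/
def Oriented {V : Type*} (E : V → V → Prop) : Prop :=
  (∀ x, ¬ E x x) ∧ ∀ x y, E x y → ¬ E y x

/-- A set `U` of vertices is acyclic if the induced subgraph on `U`
has no directed cycle. -/
def AcyclicOn {V : Type*} (E : V → V → Prop) (U : Set V) : Prop :=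
  ∀ v, ¬ Relation.TransGen (fun x y => x ∈ U ∧ y ∈ U ∧ E x y) v v

/-- A set `U` is `k`-special: acyclic, and every connected component of
the underlying undirected induced graph on `U` has at most `k` vertices. -/
def SpecialOn {V : Type*} (E : V → V → Prop) (k : ℝ) (U : Set V) : Prop :=
  AcyclicOn E U ∧ ∀ v ∈ U,
    (({w ∈ U | Relation.ReflTransGen
        (fun x y => x ∈ U ∧ y ∈ U ∧ (E x y ∨ E y x)) v w}).ncard : ℝ) ≤ k

/-- Number of directed edges. -/
noncomputable def edgeCount {V : Type*} (E : V → V → Prop) : ℕ :=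
  {p : V × V | E p.1 p.2}.ncard

/-- Every monochromatic directed path (w.r.t. the 2-colouring `c`) has
length (number of edges) at most `L`. -/
def MonoPathBound {V : Type*} (E : V → V → Prop) (c : V → V → Bool) (L : ℕ) : Prop :=
  ∀ (b : Bool) (l : List V), l.Nodup →
    l.Chain' (fun x y => E x y ∧ c x y = b) → l.length ≤ L + 1

private lemma chain'_mem_imp {α : Type*} {P Q : α → α → Prop} :
    ∀ l : List α, (∀ x ∈ l, ∀ y ∈ l, P x y → Q x y) → l.Chain' P → l.Chain' Q
  | [], _, _ => List.isChain_nil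
  | [_], _, _ => List.isChain_singleton _
  | x :: y :: t, hmem, hc => by
      rw [List.Chain', List.isChain_cons_cons] at hc ⊢
      refine ⟨hmem x (by simp) y (by simp) hc.1, ?_⟩
      exact chain'_mem_imp (y :: t)
        (fun a ha b hb => hmem a (List.mem_cons_of_mem _ ha) b (List.mem_cons_of_mem _ hb)) hc.2

private lemma chain_lt_length (F : Finset ℕ) (l : List ℕ) (hc : l.Chain' (· < ·))
    (hm : ∀ m ∈ l, m ∈ F) : l.length ≤ F.card := by
  have hp : l.Pairwise (· < ·) := List.isChain_iff_pairwise.mp hc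
  have hnd : l.Nodup := hp.imp (fun h => ne_of_lt h)
  calc l.length = l.toFinset.card := (List.toFinset_card_of_nodup hnd).symm
  _ ≤ F.card := Finset.card_le_card (fun m hm' => hm m (List.mem_toFinset.mp hm'))

/-- If `U` is a `k`-special set with `k = s²` a perfect square, the edges of the
induced subgraph on `U` can be 2-coloured so that every monochromatic directed
path in `U` has length at most `s = √k`. -/
theorem colour_special_set {V : Type*} [Fintype V] (E : V → V → Prop)
    (U : Set V) (k s : ℕ) (hk : k = s ^ 2)
    (hU : SpecialOn E (k : ℝ) U) :
    ∃ c : V → V → Bool,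
      ∀ (b : Bool) (l : List V), l.Nodup → (∀ v ∈ l, v ∈ U) →
        l.Chain' (fun x y => E x y ∧ c x y = b) → l.length ≤ s + 1 := by
  classical
  obtain ⟨hacyc, hcomp⟩ := hU
  set R : V → V → Prop := fun x y => x ∈ U ∧ y ∈ U ∧ E x y with hR
  set S : V → V → Prop := fun x y => x ∈ U ∧ y ∈ U ∧ (E x y ∨ E y x) with hS
  set h : V → ℕ := fun v => {w | Relation.TransGen R w v}.ncard with hh
  have hmono : ∀ {x y}, R x y → h x < h y := by
    intro x y hxy
    apply Set.ncard_lt_ncard _ (Set.toFinite _)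
    rw [Set.ssubset_iff_of_subset (fun w hw => hw.tail hxy)]
    exact ⟨x, Relation.TransGen.single hxy, fun hc => hacyc x hc⟩
  have key : ∀ v w, Relation.TransGen R w v → w ∈ U ∧ Relation.ReflTransGen S v w := by
      intro v w hw
      induction hw with
      | single hstep =>
          exact ⟨hstep.1, Relation.ReflTransGen.single ⟨hstep.2.1, hstep.1, Or.inr hstep.2.2⟩⟩
      | tail _ hbc ih =>
          exact ⟨ih.1, Relation.ReflTransGen.head ⟨hbc.2.1, hbc.1, Or.inr hbc.2.2⟩ ih.2⟩
  have hboundN : ∀ v ∈ U, h v + 1 ≤ k := by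
    intro v hv
    have hv_not : v ∉ {w | Relation.TransGen R w v} := fun hc => hacyc v hc
    have hsubC : insert v {w | Relation.TransGen R w v} ⊆
        {w ∈ U | Relation.ReflTransGen S v w} := by
      intro w hw
      rcases hw with rfl | hw
      · exact ⟨hv, Relation.ReflTransGen.refl⟩
      · exact ⟨(key v w hw).1, (key v w hw).2⟩
    have hcard : h v + 1 ≤ {w ∈ U | Relation.ReflTransGen S v w}.ncard := by
      rw [← Set.ncard_insert_of_notMem hv_not (Set.toFinite _)]
      exact Set.ncard_le_ncard hsubC (Set.toFinite _)
    have hle := hcomp v hv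
    have : ({w ∈ U | Relation.ReflTransGen S v w}.ncard : ℝ) ≤ (k : ℝ) := hle
    have hfin : ((h v + 1 : ℕ) : ℝ) ≤ (k : ℝ) := le_trans (by exact_mod_cast hcard) this
    exact_mod_cast hfin
  refine ⟨fun x y => decide (h x / s = h y / s), ?_⟩
  intro b l hnd hmemU hchain
  cases l with
  | nil => simp
  | cons x t =>
    have hxU : x ∈ U := hmemU x (List.mem_cons_self)
    have hs : 0 < s := by
      rcases Nat.eq_zero_or_pos s with hs0 | hs0
      · exfalso; have := hboundN x hxU; rw [hk, hs0] at this; simp at this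
      · exact hs0
    have hss : ∀ v ∈ x :: t, h v < s * s := by
      intro v hv
      have := hboundN v (hmemU v hv)
      rw [hk, pow_two] at this; omega
    cases b with
    | false =>
      have hc2 : (x :: t).Chain' (fun a c => h a / s < h c / s) := by
        refine chain'_mem_imp _ ?_ hchain
        intro a ha c hc hp
        have hRac : R a c := ⟨hmemU a ha, hmemU c hc, hp.1⟩
        have hne : h a / s ≠ h c / s := by simpa using hp.2
        exact lt_of_le_of_ne (Nat.div_le_div_right (hmono hRac).le) hne
      have hc3 : ((x :: t).map (fun v => h v / s)).Chain' (· < ·) :=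
        (List.isChain_map _).mpr hc2
      have hmem : ∀ m ∈ (x :: t).map (fun v => h v / s), m ∈ Finset.range s := by
        intro m hm
        rcases List.mem_map.mp hm with ⟨v, hv, rfl⟩
        exact Finset.mem_range.mpr ((Nat.div_lt_iff_lt_mul hs).mpr (hss v hv))
      have := chain_lt_length (Finset.range s) _ hc3 hmem
      rw [List.length_map, Finset.card_range] at this
      omega
    | true =>
      set q := h x / s with hq
      haveI : IsTrans ℕ (fun a b => a < b ∧ a / s = b / s) :=
        ⟨fun a b c h1 h2 => ⟨h1.1.trans h2.1, h1.2.trans h2.2⟩⟩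
      have hc2 : (x :: t).Chain' (fun a c => h a < h c ∧ h a / s = h c / s) := by
        refine chain'_mem_imp _ ?_ hchain
        intro a ha c hc hp
        have hRac : R a c := ⟨hmemU a ha, hmemU c hc, hp.1⟩
        exact ⟨hmono hRac, by simpa using hp.2⟩
      have hc3 : ((x :: t).map h).Chain' (fun a b => a < b ∧ a / s = b / s) :=
        (List.isChain_map _).mpr hc2
      have hp : ((x :: t).map h).Pairwise (fun a b => a < b ∧ a / s = b / s) :=
        List.isChain_iff_pairwise.mp hc3
      have hdivq : ∀ m ∈ (x :: t).map h, m / s = q := by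
        intro m hm
        rw [List.map_cons] at hm hp
        rcases List.mem_cons.mp hm with rfl | hm'
        · rfl
        · exact ((List.pairwise_cons.mp hp).1 m hm').2.symm
      have hmem : ∀ m ∈ (x :: t).map h, m ∈ Finset.Ico (q * s) (q * s + s) := by
        intro m hm
        have hd := hdivq m hm
        have h1 : m < (q + 1) * s := (Nat.div_lt_iff_lt_mul hs).mp (by omega)
        have h2 : q * s ≤ m := by rw [← hd]; exact Nat.div_mul_le_self m s
        rw [add_mul, one_mul] at h1
        exact Finset.mem_Ico.mpr ⟨h2, h1⟩
      have hlt : ((x :: t).map h).Chain' (· < ·) := hc3.imp (fun a b hab => hab.1)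
      have := chain_lt_length _ _ hlt hmem
      rw [List.length_map, Nat.card_Ico] at this
      omega
end

section
/- Let G be a directed graph and suppose its vertex set is partitioned into sets U₁, …, U_l such that each induced subgraph G[U_i] has no directed path with more than s edges under some given 2-edge-colouring c_i of G[U_i]. Colour all edges inside each U_i by c_i, colour edges from U_i to U_j red when i < j and blue when i > j. Then every monochromatic directed path in the resulting colouring has length at most l·(s+1). -/
open Real

private lemma chain'_mono_mem {V : Type*} {R S : V → V → Prop} :
    ∀ (l : List V), l.Chain' R → (∀ x ∈ l, ∀ y ∈ l, R x y → S x y) → l.Chain' S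
  | [], _, _ => List.isChain_nil
  | [_], _, _ => List.isChain_singleton _
  | a :: b :: t, h, hm => by
    rw [List.Chain', List.isChain_cons_cons] at h ⊢
    exact ⟨hm a (by simp) b (by simp) h.1,
      chain'_mono_mem (b :: t) h.2 (fun x hx y hy =>
        hm x (List.mem_cons_of_mem _ hx) y (List.mem_cons_of_mem _ hy))⟩

private lemma block_aux {V : Type*} {r : V → V → Prop} {f : V → ℕ} {m : ℕ}
    (mono : ∀ x y, r x y → f x ≤ f y)
    (bound : ∀ (p : List V), p.Nodup → p.Chain' r → (∃ i, ∀ v ∈ p, f v = i) →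
      p.length ≤ m) :
    ∀ (k : ℕ) (a : ℕ) (p : List V), p.Nodup → p.Chain' r →
      (∀ v ∈ p, a ≤ f v ∧ f v < a + k) → p.length ≤ k * m := by
  intro k
  induction k with
  | zero =>
    intro a p _ _ hf
    cases p with
    | nil => simp
    | cons x t => exact absurd (hf x (by simp)) (by omega)
  | succ k ih =>
    intro a p hnd hch hf
    cases p with
    | nil => simp
    | cons x t =>
      set p : List V := x :: t with hp
      set q := p.takeWhile (fun v => f v == f x) with hq
      set rest := p.dropWhile (fun v => f v == f x) with hrest
      have hsplit : q ++ rest = p := List.takeWhile_append_dropWhile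
      have hqconst : ∀ v ∈ q, f v = f x := by
        intro v hv
        simpa using List.mem_takeWhile_imp hv
      have hqlen : q.length ≤ m :=
        bound q (hnd.sublist (List.takeWhile_sublist _))
          (hch.prefix (List.takeWhile_prefix _)) ⟨f x, hqconst⟩
      have hpw : p.Pairwise (fun u v => f u ≤ f v) := by
        have hc : p.Chain' (fun u v => f u ≤ f v) := hch.imp mono
        haveI : IsTrans V (fun u v => f u ≤ f v) := ⟨fun _ _ _ h h' => le_trans h h'⟩
        exact List.isChain_iff_pairwise.mp hc
      have hrpw : rest.Pairwise (fun u v => f u ≤ f v) :=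
        hpw.sublist (List.dropWhile_sublist _)
      cases hr : rest with
      | nil =>
        have : p.length = q.length := by rw [← hsplit, hr]; simp
        rw [this]
        calc q.length ≤ m := hqlen
        _ ≤ (k + 1) * m := Nat.le_mul_of_pos_left m (Nat.succ_pos k)
      | cons y t' =>
        have hyne : f y ≠ f x := by
          have hw : p.dropWhile (fun v => f v == f x) ≠ [] := by
            rw [← hrest, hr]; simp
          have h2 := List.head_dropWhile_not (fun v => f v == f x) hw
          have h3 : (p.dropWhile (fun v => f v == f x)).head hw = y := by
            have : rest.head (by rw [hr]; simp) = y := by simp [hr]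
            exact this
          rw [h3] at h2
          simpa using h2
        have hymem : y ∈ p := by
          rw [← hsplit, hr]; simp
        have hxy : f x ≤ f y := by
          rcases List.mem_cons.mp (hp ▸ hymem) with h | h
          · rw [h]
          · exact (List.pairwise_cons.mp hpw).1 y h
        have hrestbig : ∀ v ∈ rest, f x + 1 ≤ f v := by
          intro v hv
          rw [hr] at hv
          rcases List.mem_cons.mp hv with h | h
          · subst h; omega
          · have := (hr ▸ hrpw : (y :: t').Pairwise _)
            have := (List.pairwise_cons.mp this).1 v h
            omega
        have hrestlen : rest.length ≤ k * m := by
          apply ih (f x + 1) rest (hnd.sublist (List.dropWhile_sublist _))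
            (hch.suffix (List.dropWhile_suffix _))
          intro v hv
          have h1 := hrestbig v hv
          have h2 := hf v ((List.dropWhile_suffix _).mem hv)
          have h3 := hf x (by simp [hp])
          omega
        have : p.length = q.length + rest.length := by
          rw [← hsplit, List.length_append]
        rw [this, Nat.succ_mul]
        omega

/-- If the vertex set is partitioned into parts `U_i = idx⁻¹(i)`, each coloured
by `c i` so that monochromatic paths inside `U_i` have at most `s` edges, and
edges between parts are coloured red (`true`) when going from a smaller-indexed
part to a larger one and blue (`false`) otherwise, then every monochromatic
directed path has length at most `l (s+1)`. -/
theorem partition_colouring {V : Type*} (E : V → V → Prop) (l s : ℕ)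
    (idx : V → Fin l) (c : Fin l → V → V → Bool)
    (hparts : ∀ (i : Fin l) (b : Bool) (p : List V), p.Nodup →
      (∀ v ∈ p, idx v = i) →
      p.Chain' (fun x y => E x y ∧ c i x y = b) → p.length ≤ s + 1) :
    ∀ (b : Bool) (p : List V), p.Nodup →
      p.Chain' (fun x y => E x y ∧
        (if idx x = idx y then c (idx x) x y
         else decide ((idx x : ℕ) < (idx y : ℕ))) = b) →
      p.length ≤ l * (s + 1) + 1 := by
  intro b p hnd hch
  rcases Nat.eq_zero_or_pos l with hl | hl
  · cases p with
    | nil => simp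
    | cons x t => subst hl; exact (idx x).elim0
  · have mono : ∀ x y, (fun x y => E x y ∧
        (if idx x = idx y then c (idx x) x y
         else decide ((idx x : ℕ) < (idx y : ℕ))) = b) x y →
        (fun v => if b then (idx v : ℕ) else l - 1 - (idx v : ℕ)) x ≤
        (fun v => if b then (idx v : ℕ) else l - 1 - (idx v : ℕ)) y := by
      rintro x y ⟨-, hcol⟩
      by_cases h : idx x = idx y
      · simp only [h]; exact le_refl _
      · rw [if_neg h] at hcol
        have hne : (idx x : ℕ) ≠ (idx y : ℕ) := fun hc => h (Fin.ext hc)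
        cases b with
        | true =>
          have : (idx x : ℕ) < idx y := by simpa using hcol
          simpa using this.le
        | false =>
          have : ¬ (idx x : ℕ) < idx y := by simpa using hcol
          simp only [Bool.false_eq_true, if_false]
          omega
    have bound : ∀ (q : List V), q.Nodup → q.Chain' (fun x y => E x y ∧
        (if idx x = idx y then c (idx x) x y
         else decide ((idx x : ℕ) < (idx y : ℕ))) = b) →
        (∃ i, ∀ v ∈ q, (fun v => if b then (idx v : ℕ) else l - 1 - (idx v : ℕ)) v = i) →
        q.length ≤ s + 1 := by
      rintro q hqnd hqch ⟨i, hi⟩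
      cases q with
      | nil => simp
      | cons x t =>
        have hidx : ∀ v ∈ x :: t, idx v = idx x := by
          intro v hv
          have h1 := hi v hv
          have h2 := hi x (by simp)
          have hvlt : (idx v : ℕ) < l := (idx v).isLt
          have hxlt : (idx x : ℕ) < l := (idx x).isLt
          refine Fin.ext ?_
          cases b <;> simp only [Bool.false_eq_true, if_true, if_false] at h1 h2 <;> omega
        apply hparts (idx x) b _ hqnd hidx
        apply chain'_mono_mem _ hqch
        rintro u hu v hv ⟨he, hcol⟩
        refine ⟨he, ?_⟩
        have huv : idx u = idx v := (hidx u hu).trans (hidx v hv).symm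
        rw [if_pos huv] at hcol
        rw [hidx u hu] at hcol
        exact hcol
    have key := block_aux mono bound l 0 p hnd hch ?_
    · calc p.length ≤ l * (s + 1) := key
        _ ≤ l * (s + 1) + 1 := Nat.le_succ _
    · intro v hv
      refine ⟨Nat.zero_le _, ?_⟩
      have := (idx v).isLt
      cases b <;> simp only [Bool.false_eq_true, if_true, if_false] <;> omega
end
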